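/- For every real δ with 1/2 < δ < 1 there exists a constant C > 0 such that for all t > 0 one has ∫₀ᵗ (1+t-s)^(-3/2) · (s^(1/2-δ) - t^(1/2-δ)) · (1+s)^(-1/2) ds ≤ C · (1+t)^(-1/2-δ). (Note that for 0 < s ≤ t and δ > 1/2 one has s^(1/2-δ) ≥ t^(1/2-δ), so the integrand is nonnegative.) -/

import Mathlib

open MeasureTheory Set Real

/-!
Split the integral at `t / 2`. For `s < t / 2` the kernel is `≲ (1 + t)^(-3/2)` and the rest of
the integrand is at most `s^(-δ)`, whose integral is `≲ t^(1-δ)`. For `s > t / 2` the difference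
`s^(1/2-δ) - t^(1/2-δ)` vanishes linearly in `t - s` (tangent line of a convex power), which
cancels one power of the kernel and leaves the integrable singularity `(t - s)^(-1/2)`; this
part is `≲ t^(-1/2-δ)`. For `t ≤ 1` the crude bound `s^(-δ)` on all of `(0, t)` suffices.
-/

theorem rpow_neg_sub_rpow_neg_le {q s t : ℝ} (hq : 0 ≤ q) (hs : 0 < s) (hst : s ≤ t) :
    s ^ (-q) - t ^ (-q) ≤ q * s ^ (-q - 1) * (t - s) := by
  have ht : 0 < t := hs.trans_le hst
  have hsq : 0 < s ^ q := by positivity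
  have htq : 0 < t ^ q := by positivity
  -- Bernoulli's inequality for the exponent `1 + q` at `s / t - 1 ∈ [-1, 0]`
  have bernoulli := one_add_mul_self_le_rpow_one_add (s := s / t - 1)
    (by linarith [div_nonneg hs.le ht.le]) (p := 1 + q) (by linarith)
  rw [add_sub_cancel, div_rpow hs.le ht.le, le_div_iff₀ (by positivity), rpow_add hs,
    rpow_add ht, rpow_one, rpow_one] at bernoulli
  have hcross : s * t ^ q - s * s ^ q ≤ q * (t - s) * t ^ q := by
    have : (1 + (1 + q) * (s / t - 1)) * (t * t ^ q) = t ^ q * (s - q * (t - s)) := by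
      field_simp; ring
    nlinarith
  rw [rpow_neg hs.le, rpow_neg ht.le, show -q - 1 = -(q + 1) by ring, rpow_neg hs.le,
    rpow_add hs, rpow_one, inv_sub_inv hsq.ne' htq.ne', div_le_iff₀ (by positivity)]
  calc t ^ q - s ^ q = (s * t ^ q - s * s ^ q) / s := by field_simp
    _ ≤ q * (t - s) * t ^ q / s := by gcongr
    _ = q * (s ^ q * s)⁻¹ * (t - s) * (s ^ q * t ^ q) := by field_simp

theorem integral_Ioo_rpow {r T : ℝ} (hr : -1 < r) (hT : 0 ≤ T) :
    ∫ s in Ioo 0 T, s ^ r = T ^ (r + 1) / (r + 1) := by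
  rw [← integral_Ioc_eq_integral_Ioo, ← intervalIntegral.integral_of_le hT,
    integral_rpow (Or.inl hr), zero_rpow (by linarith), sub_zero]

theorem integrableOn_Ioo_sub_rpow {r a t : ℝ} (hr : -1 < r) (hat : a ≤ t) :
    IntegrableOn (fun s ↦ (t - s) ^ r) (Ioo a t) := by
  have h :=
    ((intervalIntegral.intervalIntegrable_rpow' hr (a := 0) (b := t - a)).comp_sub_left t).symm
  rwa [sub_zero, sub_sub_cancel, intervalIntegrable_iff_integrableOn_Ioo_of_le hat] at h

theorem integral_Ioo_sub_rpow {r a t : ℝ} (hr : -1 < r) (hat : a ≤ t) :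
    ∫ s in Ioo a t, (t - s) ^ r = (t - a) ^ (r + 1) / (r + 1) := by
  rw [← integral_Ioc_eq_integral_Ioo, ← intervalIntegral.integral_of_le hat,
    intervalIntegral.integral_comp_sub_left (fun u ↦ u ^ r) t, sub_self,
    integral_rpow (Or.inl hr), zero_rpow (by linarith), sub_zero]

theorem div_rpow_neg_eq_mul {x c p : ℝ} (hx : 0 ≤ x) (hc : 0 ≤ c) :
    (x / c) ^ (-p) = c ^ p * x ^ (-p) := by
  rw [div_rpow hx hc, rpow_neg hc, div_inv_eq_mul, mul_comm]

noncomputable def convolutionIntegrand (δ t s : ℝ) : ℝ :=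
  (1 + t - s) ^ (-(3:ℝ)/2) * (s ^ ((1:ℝ)/2 - δ) - t ^ ((1:ℝ)/2 - δ)) *
    (1 + s) ^ (-(1:ℝ)/2)

section convolutionIntegrand

variable {δ t s : ℝ}

theorem convolutionIntegrand_nonneg (hδ : 1/2 ≤ δ) (hs : 0 < s) (hst : s ≤ t) :
    0 ≤ convolutionIntegrand δ t s := by
  have hdiff : t ^ ((1:ℝ)/2 - δ) ≤ s ^ ((1:ℝ)/2 - δ) :=
    rpow_le_rpow_of_nonpos hs hst (by linarith)
  unfold convolutionIntegrand
  have : 0 ≤ 1 + t - s := by linarith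
  have : 0 ≤ s ^ ((1:ℝ)/2 - δ) - t ^ ((1:ℝ)/2 - δ) := sub_nonneg.mpr hdiff
  positivity

theorem convolutionIntegrand_le (hs : 0 < s) (hst : s ≤ t) :
    convolutionIntegrand δ t s ≤ (1 + t - s) ^ (-(3:ℝ)/2) * s ^ (-δ) := by
  have hdiff : s ^ ((1:ℝ)/2 - δ) - t ^ ((1:ℝ)/2 - δ) ≤ s ^ ((1:ℝ)/2 - δ) :=
    sub_le_self _ (rpow_nonneg (hs.le.trans hst) _)
  have hdecay : (1 + s) ^ (-(1:ℝ)/2) ≤ s ^ (-(1:ℝ)/2) :=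
    rpow_le_rpow_of_nonpos hs (by linarith) (by norm_num)
  calc convolutionIntegrand δ t s
      ≤ (1 + t - s) ^ (-(3:ℝ)/2) * s ^ ((1:ℝ)/2 - δ) * s ^ (-(1:ℝ)/2) := by
        unfold convolutionIntegrand
        have : 0 ≤ 1 + t - s := by linarith
        gcongr
    _ = (1 + t - s) ^ (-(3:ℝ)/2) * s ^ (-δ) := by
        rw [mul_assoc, ← rpow_add hs]; ring_nf

theorem convolutionIntegrand_le_rpow_neg (hs : 0 < s) (hst : s ≤ t) :
    convolutionIntegrand δ t s ≤ s ^ (-δ) := by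
  have hkernel : (1 + t - s) ^ (-(3:ℝ)/2) ≤ 1 :=
    rpow_le_one_of_one_le_of_nonpos (by linarith) (by norm_num)
  calc convolutionIntegrand δ t s ≤ (1 + t - s) ^ (-(3:ℝ)/2) * s ^ (-δ) :=
        convolutionIntegrand_le hs hst
    _ ≤ s ^ (-δ) := mul_le_of_le_one_left (by positivity) hkernel

theorem convolutionIntegrand_le_of_lt (hδ : 1/2 ≤ δ) (hs : 0 < s) (hst : s < t) :
    convolutionIntegrand δ t s ≤ (δ - 1/2) * s ^ (-1 - δ) * (t - s) ^ (-(1:ℝ)/2) := by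
  have hts : 0 < t - s := sub_pos.mpr hst
  have hkernel : (1 + t - s) ^ (-(3:ℝ)/2) ≤ (t - s) ^ (-(3:ℝ)/2) :=
    rpow_le_rpow_of_nonpos hts (by linarith) (by norm_num)
  have hdiff : s ^ ((1:ℝ)/2 - δ) - t ^ ((1:ℝ)/2 - δ) ≤
      (δ - 1/2) * s ^ (-(1:ℝ)/2 - δ) * (t - s) := by
    have h := rpow_neg_sub_rpow_neg_le (q := δ - 1/2) (by linarith) hs hst.le
    rwa [neg_sub, show (1:ℝ)/2 - δ - 1 = -(1:ℝ)/2 - δ by ring] at h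
  have hdecay : (1 + s) ^ (-(1:ℝ)/2) ≤ s ^ (-(1:ℝ)/2) :=
    rpow_le_rpow_of_nonpos hs (by linarith) (by norm_num)
  calc convolutionIntegrand δ t s
      ≤ (t - s) ^ (-(3:ℝ)/2) * ((δ - 1/2) * s ^ (-(1:ℝ)/2 - δ) * (t - s)) *
          s ^ (-(1:ℝ)/2) := by
        unfold convolutionIntegrand
        have : 0 ≤ s ^ ((1:ℝ)/2 - δ) - t ^ ((1:ℝ)/2 - δ) :=
          sub_nonneg.mpr (rpow_le_rpow_of_nonpos hs hst.le (by linarith))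
        have : 0 ≤ 1 + t - s := by linarith
        gcongr
    _ = (δ - 1/2) * (s ^ (-(1:ℝ)/2 - δ) * s ^ (-(1:ℝ)/2)) *
          ((t - s) ^ (-(3:ℝ)/2) * (t - s) ^ (1:ℝ)) := by rw [rpow_one]; ring
    _ = (δ - 1/2) * s ^ (-1 - δ) * (t - s) ^ (-(1:ℝ)/2) := by
        rw [← rpow_add hs, ← rpow_add hts]; ring_nf

theorem integrableOn_convolutionIntegrand (hδ : 1/2 ≤ δ) (hδ1 : δ < 1) :
    IntegrableOn (convolutionIntegrand δ t) (Ioo 0 t) := by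
  refine Integrable.mono' (g := fun s ↦ s ^ (-δ)) ?_ ?_ ?_
  · rcases le_or_gt t 0 with ht | ht
    · simp [Ioo_eq_empty_of_le ht]
    · exact (intervalIntegral.integrableOn_Ioo_rpow_iff ht).mpr (by linarith)
  · unfold convolutionIntegrand
    exact Measurable.aestronglyMeasurable (by fun_prop)
  · refine (ae_restrict_iff' measurableSet_Ioo).mpr (ae_of_all _ fun s ⟨hs, hst⟩ ↦ ?_)
    rw [norm_of_nonneg (convolutionIntegrand_nonneg hδ hs hst.le)]
    exact convolutionIntegrand_le_rpow_neg hs hst.le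

theorem integral_convolutionIntegrand_Ioo_zero_half_le (hδ : 1/2 ≤ δ) (hδ1 : δ < 1)
    (ht : 0 < t) :
    ∫ s in Ioo 0 (t/2), convolutionIntegrand δ t s ≤
      2 ^ ((1:ℝ)/2 + δ) / (1 - δ) * (1 + t) ^ (-(1:ℝ)/2 - δ) := by
  have hkernel : ∀ s ∈ Ioo 0 (t/2),
      convolutionIntegrand δ t s ≤ ((1 + t)/2) ^ (-(3:ℝ)/2) * s ^ (-δ) :=
    fun s ⟨hs, hst⟩ ↦ (convolutionIntegrand_le hs (by linarith)).trans <| by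
      gcongr ?_ * _
      exact rpow_le_rpow_of_nonpos (by positivity) (by linarith) (by norm_num)
  have hδ' : 0 < 1 - δ := by linarith
  calc ∫ s in Ioo 0 (t/2), convolutionIntegrand δ t s
      ≤ ∫ s in Ioo 0 (t/2), ((1 + t)/2) ^ (-(3:ℝ)/2) * s ^ (-δ) :=
        setIntegral_mono_of_nonneg
          (fun s ⟨hs, hst⟩ ↦ convolutionIntegrand_nonneg hδ hs (by linarith)) hkernel
          (((intervalIntegral.integrableOn_Ioo_rpow_iff (by positivity)).mpr
            (by linarith)).const_mul _)
    _ = ((1 + t)/2) ^ (-(3:ℝ)/2) * ((t/2) ^ (1 - δ) / (1 - δ)) := by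
        rw [integral_const_mul, integral_Ioo_rpow (by linarith) (by positivity), neg_add_eq_sub]
    _ ≤ ((1 + t)/2) ^ (-(3:ℝ)/2) * (((1 + t)/2) ^ (1 - δ) / (1 - δ)) := by
        gcongr
        linarith
    _ = ((1 + t)/2) ^ (-((1:ℝ)/2 + δ)) / (1 - δ) := by
        rw [mul_div_assoc', ← rpow_add (by positivity)]; ring_nf
    _ = 2 ^ ((1:ℝ)/2 + δ) / (1 - δ) * (1 + t) ^ (-(1:ℝ)/2 - δ) := by
        rw [div_rpow_neg_eq_mul (by positivity) zero_le_two]; ring_nf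

theorem integral_convolutionIntegrand_Ioo_half_le (hδ : 1/2 ≤ δ) (ht : 1 ≤ t) :
    ∫ s in Ioo (t/2) t, convolutionIntegrand δ t s ≤
      (2 * δ - 1) * 4 ^ ((1:ℝ)/2 + δ) * (1 + t) ^ (-(1:ℝ)/2 - δ) := by
  have hsing : ∀ s ∈ Ioo (t/2) t, convolutionIntegrand δ t s ≤
      (δ - 1/2) * (t/2) ^ (-1 - δ) * (t - s) ^ (-(1:ℝ)/2) := fun s ⟨hs, hst⟩ ↦
    (convolutionIntegrand_le_of_lt hδ (by linarith) hst).trans <| by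
      have : 0 ≤ δ - 1/2 := by linarith
      gcongr _ * ?_ * _
      exact rpow_le_rpow_of_nonpos (by positivity) hs.le (by linarith)
  calc ∫ s in Ioo (t/2) t, convolutionIntegrand δ t s
      ≤ ∫ s in Ioo (t/2) t, (δ - 1/2) * (t/2) ^ (-1 - δ) * (t - s) ^ (-(1:ℝ)/2) :=
        setIntegral_mono_of_nonneg
          (fun s ⟨hs, hst⟩ ↦ convolutionIntegrand_nonneg hδ (by linarith) hst.le) hsing
          ((integrableOn_Ioo_sub_rpow (by norm_num) (by linarith)).const_mul _)
    _ = (2 * δ - 1) * (t/2) ^ (-((1:ℝ)/2 + δ)) := by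
        rw [integral_const_mul, integral_Ioo_sub_rpow (by norm_num) (by linarith),
          sub_half, show -(1:ℝ)/2 + 1 = 1/2 by norm_num,
          show -((1:ℝ)/2 + δ) = (-1 - δ) + 1/2 by ring, rpow_add (by positivity)]
        ring
    _ ≤ (2 * δ - 1) * ((1 + t)/4) ^ (-((1:ℝ)/2 + δ)) := by
        have : 0 ≤ 2 * δ - 1 := by linarith
        gcongr _ * ?_
        exact rpow_le_rpow_of_nonpos (by positivity) (by linarith) (by linarith)
    _ = (2 * δ - 1) * 4 ^ ((1:ℝ)/2 + δ) * (1 + t) ^ (-(1:ℝ)/2 - δ) := by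
        rw [div_rpow_neg_eq_mul (by positivity) (by norm_num)]; ring_nf

theorem integral_convolutionIntegrand_le_of_le_one (hδ : 1/2 ≤ δ) (hδ1 : δ < 1) (ht : 0 < t)
    (ht1 : t ≤ 1) :
    ∫ s in Ioo 0 t, convolutionIntegrand δ t s ≤
      2 ^ ((1:ℝ)/2 + δ) / (1 - δ) * (1 + t) ^ (-(1:ℝ)/2 - δ) := by
  have hδ' : 0 < 1 - δ := by linarith
  calc ∫ s in Ioo 0 t, convolutionIntegrand δ t s ≤ ∫ s in Ioo 0 t, s ^ (-δ) :=
        setIntegral_mono_of_nonneg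
          (fun s ⟨hs, hst⟩ ↦ convolutionIntegrand_nonneg hδ hs hst.le)
          (fun s ⟨hs, hst⟩ ↦ convolutionIntegrand_le_rpow_neg hs hst.le)
          ((intervalIntegral.integrableOn_Ioo_rpow_iff ht).mpr (by linarith))
    _ = t ^ (1 - δ) / (1 - δ) := by rw [integral_Ioo_rpow (by linarith) ht.le, neg_add_eq_sub]
    _ ≤ 1 / (1 - δ) := by gcongr; exact rpow_le_one ht.le ht1 hδ'.le
    _ = 2 ^ ((1:ℝ)/2 + δ) / (1 - δ) * 2 ^ (-((1:ℝ)/2 + δ)) := by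
        rw [rpow_neg zero_le_two]; field_simp
    _ ≤ 2 ^ ((1:ℝ)/2 + δ) / (1 - δ) * (1 + t) ^ (-(1:ℝ)/2 - δ) := by
        refine mul_le_mul_of_nonneg_left ?_ (by positivity)
        rw [show -(1:ℝ)/2 - δ = -((1:ℝ)/2 + δ) by ring]
        exact rpow_le_rpow_of_nonpos (by positivity) (by linarith) (by linarith)

end convolutionIntegrand

theorem integral_convolution_bound_singular
    (δ : ℝ) (hδ1 : 1/2 < δ) (hδ2 : δ < 1) :
    ∃ C : ℝ, 0 < C ∧ ∀ t : ℝ, 0 < t →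
      ∫ s in Set.Ioo (0:ℝ) t,
          (1 + t - s) ^ (-(3:ℝ)/2) * (s ^ ((1:ℝ)/2 - δ) - t ^ ((1:ℝ)/2 - δ)) *
            (1 + s) ^ (-(1:ℝ)/2)
        ≤ C * (1 + t) ^ (-(1:ℝ)/2 - δ) := by
  have hδ : 1/2 ≤ δ := hδ1.le
  refine ⟨2 ^ ((1:ℝ)/2 + δ) / (1 - δ) + (2 * δ - 1) * 4 ^ ((1:ℝ)/2 + δ), ?_,
    fun t ht ↦ ?_⟩
  · have : 0 < 1 - δ := by linarith
    exact add_pos_of_pos_of_nonneg (by positivity) (mul_nonneg (by linarith) (by positivity))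
  change ∫ s in Ioo 0 t, convolutionIntegrand δ t s ≤ _
  rcases le_or_gt t 1 with ht1 | ht1
  · refine (integral_convolutionIntegrand_le_of_le_one hδ hδ2 ht ht1).trans ?_
    gcongr
    exact le_add_of_nonneg_right (mul_nonneg (by linarith) (by positivity))
  · have hint := integrableOn_convolutionIntegrand (t := t) hδ hδ2
    rw [← Ioo_union_Ico_eq_Ioo (half_pos ht) (half_le_self ht.le),
      setIntegral_union (Ico_disjoint_Ico_same.mono_left Ioo_subset_Ico_self) measurableSet_Ico
        (hint.mono_set (Ioo_subset_Ioo_right (half_le_self ht.le)))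
        (hint.mono_set (Ico_subset_Ioo_left (half_pos ht))),
      integral_Ico_eq_integral_Ioo, add_mul]
    exact add_le_add (integral_convolutionIntegrand_Ioo_zero_half_le hδ hδ2 ht)
      (integral_convolutionIntegrand_Ioo_half_le hδ ht1.le)
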